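/- arXiv:1608.01671 — 2 statements merged into one kernel-verified Lean document; each statement's English description precedes it below -/
import Mathlib

section
/- The limit as real s → ∞ of (ζ(3s) - (1 - 2^{-3s})^{-1})^{-1/s} equals 27. -/
open Filter Real

noncomputable def zetaR (s : ℝ) : ℝ := ∑' m : ℕ, (m : ℝ) ^ (-s)

/-- `P k` is the (k+1)-st prime: `P 0 = 2`, `P 1 = 3`, ... -/
noncomputable def P (k : ℕ) : ℕ := Nat.nth Nat.Prime k

/-- Partial Euler product `Q n s = ∏_{k=1}^n (1 - p_k^{-s})⁻¹`. -/
noncomputable def Q (n : ℕ) (s : ℝ) : ℝ := ∏ k ∈ Finset.range n, (1 - (P k : ℝ) ^ (-s))⁻¹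

/-!
The geometric series `(1 - 2^{-t})⁻¹` is the part of `ζ(t)` coming from the powers of two, so the
difference is `∑ m^{-t}` over the remaining `m`, the first of which is `3`. Hence
`3^{-t} ≤ ζ(t) - (1 - 2^{-t})⁻¹ ≤ K 3^{-t}` for `t ≥ 2`, and taking `(-1/s)`-th powers at `t = 3s`
squeezes the expression between `K^{-1/s} · 27` and `27`.
-/

open Topology

theorem tendsto_rpow_neg_one_div_of_le_rpow_neg {g : ℝ → ℝ} {a K : ℝ} (ha : 0 < a)
    (hlow : ∀ᶠ s in atTop, a ^ (-s) ≤ g s) (hup : ∀ᶠ s in atTop, g s ≤ K * a ^ (-s)) :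
    Tendsto (fun s => g s ^ (-1 / s)) atTop (𝓝 a) := by
  have hK : 0 < K := by
    obtain ⟨s, hs_low, hs_up⟩ := (hlow.and hup).exists
    have hpos : 0 < a ^ (-s) := rpow_pos_of_pos ha _
    nlinarith
  have hroot : ∀ {c s : ℝ}, 0 < c → 0 < s → (c * a ^ (-s)) ^ (-1 / s) = c ^ (-1 / s) * a := by
    intro c s hc hs
    rw [mul_rpow hc.le (rpow_nonneg ha.le _), ← rpow_mul ha.le,
      show -s * (-1 / s) = 1 by field_simp, rpow_one]
  have hlim : Tendsto (fun s : ℝ => K ^ (-1 / s) * a) atTop (𝓝 a) := by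
    have hexp : Tendsto (fun s : ℝ => -1 / s) atTop (𝓝 0) :=
      tendsto_const_nhds.div_atTop tendsto_id
    simpa using (tendsto_const_nhds.rpow hexp (Or.inl hK.ne')).mul_const a
  refine tendsto_of_tendsto_of_tendsto_of_le_of_le' hlim tendsto_const_nhds ?_ ?_
  all_goals filter_upwards [hlow, hup, eventually_gt_atTop 0] with s hs_low hs_up hs
  all_goals have hexp : -1 / s ≤ 0 := div_nonpos_of_nonpos_of_nonneg (by norm_num) hs.le
  · calc K ^ (-1 / s) * a = (K * a ^ (-s)) ^ (-1 / s) := (hroot hK hs).symm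
      _ ≤ g s ^ (-1 / s) :=
        rpow_le_rpow_of_nonpos ((rpow_pos_of_pos ha _).trans_le hs_low) hs_up hexp
  · calc g s ^ (-1 / s) ≤ (1 * a ^ (-s)) ^ (-1 / s) :=
          rpow_le_rpow_of_nonpos (by positivity) (by rwa [one_mul]) hexp
      _ = a := by rw [hroot one_pos hs, one_rpow, one_mul]

def powersOfTwo : Set ℕ := Set.range (2 ^ ·)

theorem three_notMem_powersOfTwo : 3 ∉ powersOfTwo := by
  rintro ⟨k, hk⟩
  rcases k with _ | _ | k
  · simp at hk
  · simp at hk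
  · have hk : 2 ^ k * 4 = 3 := by rw [← hk]; ring
    omega

theorem eq_zero_or_three_le_of_notMem_powersOfTwo {m : ℕ} (hm : m ∉ powersOfTwo) :
    m = 0 ∨ 3 ≤ m := by
  rcases m with _ | _ | _ | m
  · exact .inl rfl
  · exact absurd ⟨0, rfl⟩ hm
  · exact absurd ⟨1, rfl⟩ hm
  · exact .inr (by omega)

theorem summable_nat_rpow_neg {t : ℝ} (ht : 1 < t) : Summable (fun m : ℕ => (m : ℝ) ^ (-t)) :=
  summable_nat_rpow.2 (by linarith)

theorem tsum_powersOfTwo_rpow_neg {t : ℝ} (ht : 0 < t) :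
    ∑' m : powersOfTwo, (m : ℝ) ^ (-t) = (1 - (2 : ℝ) ^ (-t))⁻¹ := by
  rw [powersOfTwo, tsum_range (fun m : ℕ => (m : ℝ) ^ (-t)) (Nat.pow_right_injective le_rfl)]
  have hpow (k : ℕ) : ((2 ^ k : ℕ) : ℝ) ^ (-t) = ((2 : ℝ) ^ (-t)) ^ k := by
    rw [Nat.cast_pow, Nat.cast_ofNat, ← rpow_natCast, ← rpow_mul zero_le_two, mul_comm,
      rpow_mul zero_le_two, rpow_natCast]
  simp_rw [hpow]
  exact tsum_geometric_of_lt_one (rpow_nonneg zero_le_two _)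
    (rpow_lt_one_of_one_lt_of_neg one_lt_two (neg_lt_zero.2 ht))

theorem zetaR_sub_eq_tsum_compl_powersOfTwo {t : ℝ} (ht : 1 < t) :
    zetaR t - (1 - (2 : ℝ) ^ (-t))⁻¹ = ∑' m : ↥powersOfTwoᶜ, (m : ℝ) ^ (-t) := by
  have hsum := summable_nat_rpow_neg ht
  rw [zetaR, ← (hsum.subtype _).tsum_add_tsum_compl (hsum.subtype _),
    tsum_powersOfTwo_rpow_neg (by linarith), add_sub_cancel_left]

theorem three_rpow_neg_le_zetaR_sub {t : ℝ} (ht : 1 < t) :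
    (3 : ℝ) ^ (-t) ≤ zetaR t - (1 - (2 : ℝ) ^ (-t))⁻¹ := by
  rw [zetaR_sub_eq_tsum_compl_powersOfTwo ht]
  exact_mod_cast ((summable_nat_rpow_neg ht).subtype _).le_tsum ⟨3, three_notMem_powersOfTwo⟩
    fun m _ => rpow_nonneg m.1.cast_nonneg _

theorem zetaR_sub_le_mul_three_rpow_neg {t : ℝ} (ht : 2 ≤ t) :
    zetaR t - (1 - (2 : ℝ) ^ (-t))⁻¹ ≤ 9 * zetaR 2 * (3 : ℝ) ^ (-t) := by
  have hterm (m : ℕ) (hm : m ∉ powersOfTwo) :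
      (m : ℝ) ^ (-t) ≤ (3 : ℝ) ^ (2 - t) * (m : ℝ) ^ (-2 : ℝ) := by
    rcases eq_zero_or_three_le_of_notMem_powersOfTwo hm with rfl | hm3
    · -- `zetaR` has an `m = 0` term, harmless since `0 ^ (-t) = 0` for `t ≠ 0`
      simp [zero_rpow (show -t ≠ 0 by linarith)]
    · have hm0 : (0 : ℝ) < m := by positivity
      have hm3' : (3 : ℝ) ≤ m := by exact_mod_cast hm3
      rw [show -t = (2 - t) + -2 by ring, rpow_add hm0]
      exact mul_le_mul_of_nonneg_right (rpow_le_rpow_of_nonpos three_pos hm3' (by linarith))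
        (rpow_nonneg hm0.le _)
  have hsum2 := (summable_nat_rpow_neg one_lt_two).mul_left ((3 : ℝ) ^ (2 - t))
  calc zetaR t - (1 - (2 : ℝ) ^ (-t))⁻¹ = ∑' m : ↥powersOfTwoᶜ, (m : ℝ) ^ (-t) :=
        zetaR_sub_eq_tsum_compl_powersOfTwo (by linarith)
    _ ≤ ∑' m : ↥powersOfTwoᶜ, (3 : ℝ) ^ (2 - t) * (m : ℝ) ^ (-2 : ℝ) :=
        (summable_nat_rpow_neg (by linarith)).subtype _ |>.tsum_le_tsum
          (fun m => hterm m m.2) (hsum2.subtype _)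
    _ ≤ ∑' m : ℕ, (3 : ℝ) ^ (2 - t) * (m : ℝ) ^ (-2 : ℝ) :=
        hsum2.tsum_subtype_le _ _ fun m => by positivity
    _ = 9 * zetaR 2 * (3 : ℝ) ^ (-t) := by
        rw [tsum_mul_left, zetaR, show 2 - t = 2 + -t by ring, rpow_add three_pos]
        norm_num
        ring

theorem cube_of_three_limit :
    Tendsto (fun s : ℝ => (zetaR (3 * s) - (1 - (2 : ℝ) ^ (-(3 * s)))⁻¹) ^ (-1 / s)) atTop
      (nhds 27) := by
  have h27 (s : ℝ) : (27 : ℝ) ^ (-s) = (3 : ℝ) ^ (-(3 * s)) := by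
    rw [neg_mul_eq_mul_neg, rpow_mul three_pos.le]
    norm_num
  refine tendsto_rpow_neg_one_div_of_le_rpow_neg (K := 9 * zetaR 2) (by norm_num) ?_ ?_
  · filter_upwards [eventually_gt_atTop (1 / 3)] with s hs
    rw [h27]
    exact three_rpow_neg_le_zetaR_sub (by linarith)
  · filter_upwards [eventually_ge_atTop (2 / 3)] with s hs
    rw [h27]
    exact zetaR_sub_le_mul_three_rpow_neg (by linarith)
end

section
/- For every integer n ≥ 0, the limit as real s → ∞ of -(Q_n'(s) - ζ'(s))/(Q_n(s) - ζ(s)) equals log(p_{n+1}), where derivatives are taken with respect to s. -/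
/-!
By the Euler product, `ζ(s) - Q_n(s)` is the Dirichlet series `G(s) = ∑ m ^ (-s)` over the positive
integers `m` that are not `p_{n+1}`-smooth, the least of which is `p_{n+1}` itself. The quotient in
question is `-G'/G = (∑ log m · m ^ (-s)) / (∑ m ^ (-s))` over the same `m`. After multiplying by
`p_{n+1} ^ s`, each term `(p_{n+1}/m) ^ s` with `m > p_{n+1}` tends to `0` while the leading term
stays fixed, so by dominated convergence numerator and denominator tend to `log p_{n+1}` and `1`.
-/

open Filter Real

open Topology

-- The `m = 0` term is `a 0 * 0 ^ (-s)`, which vanishes only for `s ≠ 0`.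
noncomputable def dirichletSeries (a : ℕ → ℝ) (s : ℝ) : ℝ := ∑' m : ℕ, a m * (m : ℝ) ^ (-s)

lemma natCast_rpow_neg_le_rpow_neg (m : ℕ) {σ s : ℝ} (hs : 0 < s) (hσs : σ ≤ s) :
    (m : ℝ) ^ (-s) ≤ (m : ℝ) ^ (-σ) := by
  rcases Nat.eq_zero_or_pos m with rfl | hm
  · rw [Nat.cast_zero, zero_rpow (neg_ne_zero.mpr hs.ne')]
    exact rpow_nonneg le_rfl _
  · exact rpow_le_rpow_of_exponent_le (by exact_mod_cast hm) (neg_le_neg hσs)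

lemma hasDerivAt_natCast_rpow_neg (m : ℕ) {s : ℝ} (hs : 0 < s) :
    HasDerivAt (fun t : ℝ => (m : ℝ) ^ (-t)) (-(log m * (m : ℝ) ^ (-s))) s := by
  rcases Nat.eq_zero_or_pos m with rfl | hm
  · have hzero : (fun t : ℝ => ((0 : ℕ) : ℝ) ^ (-t)) =ᶠ[𝓝 s] fun _ => 0 := by
      filter_upwards [eventually_gt_nhds hs] with t ht
      simp [zero_rpow (neg_ne_zero.mpr ht.ne')]
    simpa using (hasDerivAt_const s (0 : ℝ)).congr_of_eventuallyEq hzero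
  · convert (hasDerivAt_neg s).const_rpow (a := (m : ℝ)) (by exact_mod_cast hm) using 1
    ring

section DirichletSeries

variable {a : ℕ → ℝ} {σ : ℝ}

lemma summable_norm_mul_rpow_neg_of_norm_le {C : ℝ} (ha : ∀ m, ‖a m‖ ≤ C) (hσ : 1 < σ) :
    Summable fun m : ℕ => ‖a m‖ * (m : ℝ) ^ (-σ) :=
  ((summable_nat_rpow.mpr (neg_lt_neg hσ)).mul_left C).of_nonneg_of_le
    (fun m => mul_nonneg (norm_nonneg _) (rpow_nonneg m.cast_nonneg _))
    (fun m => mul_le_mul_of_nonneg_right (ha m) (rpow_nonneg m.cast_nonneg _))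

lemma Summable.norm_mul_rpow_neg_of_le (ha : Summable fun m : ℕ => ‖a m‖ * (m : ℝ) ^ (-σ))
    {s : ℝ} (hs : 0 < s) (hσs : σ ≤ s) : Summable fun m : ℕ => ‖a m‖ * (m : ℝ) ^ (-s) :=
  ha.of_nonneg_of_le (fun m => mul_nonneg (norm_nonneg _) (rpow_nonneg m.cast_nonneg _))
    (fun m => mul_le_mul_of_nonneg_left (natCast_rpow_neg_le_rpow_neg m hs hσs) (norm_nonneg _))

lemma Summable.norm_mul_log_mul_rpow_neg (ha : Summable fun m : ℕ => ‖a m‖ * (m : ℝ) ^ (-σ))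
    {s : ℝ} (hσs : σ < s) : Summable fun m : ℕ => ‖a m * log m‖ * (m : ℝ) ^ (-s) := by
  have hε : 0 < s - σ := sub_pos.mpr hσs
  refine (ha.mul_left (s - σ)⁻¹).of_nonneg_of_le
    (fun m => mul_nonneg (norm_nonneg _) (rpow_nonneg m.cast_nonneg _)) (fun m => ?_)
  rcases Nat.eq_zero_or_pos m with rfl | hm
  · simp only [Nat.cast_zero, log_zero, mul_zero, norm_zero, zero_mul]
    positivity
  have hm' : (0 : ℝ) < m := by exact_mod_cast hm
  have hlog : log m * (m : ℝ) ^ (-s) ≤ (s - σ)⁻¹ * (m : ℝ) ^ (-σ) := calc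
    log m * (m : ℝ) ^ (-s) ≤ (m : ℝ) ^ (s - σ) / (s - σ) * (m : ℝ) ^ (-s) :=
      mul_le_mul_of_nonneg_right (log_natCast_le_rpow_div m hε) (rpow_nonneg hm'.le _)
    _ = (s - σ)⁻¹ * (m : ℝ) ^ (-σ) := by
      rw [div_mul_eq_mul_div, div_eq_inv_mul, ← rpow_add hm']
      ring_nf
  rw [norm_mul, norm_of_nonneg (log_natCast_nonneg m), mul_assoc, mul_left_comm (s - σ)⁻¹]
  exact mul_le_mul_of_nonneg_left hlog (norm_nonneg _)

lemma hasDerivAt_dirichletSeries (ha : Summable fun m : ℕ => ‖a m‖ * (m : ℝ) ^ (-σ))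
    (hσ : 0 ≤ σ) {s : ℝ} (hσs : σ < s) :
    HasDerivAt (dirichletSeries a) (-dirichletSeries (fun m => a m * log m) s) s := by
  set τ := (σ + s) / 2
  have hτ : 0 < τ := by simp only [τ]; linarith
  have hτs : τ < s := by simp only [τ]; linarith
  have key := hasDerivAt_tsum_of_isPreconnected (t := Set.Ioi τ) (y₀ := s)
    (g := fun m t => a m * (m : ℝ) ^ (-t))
    (g' := fun m t => -(a m * log m * (m : ℝ) ^ (-t)))
    (ha.norm_mul_log_mul_rpow_neg (by simp only [τ]; linarith : σ < τ)) isOpen_Ioi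
    isPreconnected_Ioi
    (fun m t ht =>
      ((hasDerivAt_natCast_rpow_neg m (hτ.trans ht)).const_mul (a m)).congr_deriv (by ring))
    (fun m t ht => by
      rw [norm_neg, norm_mul, norm_of_nonneg (rpow_nonneg m.cast_nonneg _)]
      exact mul_le_mul_of_nonneg_left
        (natCast_rpow_neg_le_rpow_neg m (hτ.trans ht) ht.le) (norm_nonneg _))
    hτs ((ha.norm_mul_rpow_neg_of_le (hτ.trans hτs) hσs.le).of_norm_bounded fun m => by
      rw [norm_mul, norm_of_nonneg (rpow_nonneg m.cast_nonneg _)]) hτs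
  rw [tsum_neg] at key
  exact key

lemma tendsto_rpow_mul_dirichletSeries (ha : Summable fun m : ℕ => ‖a m‖ * (m : ℝ) ^ (-σ))
    {N : ℕ} (hN : 0 < N) (ha_lt : ∀ m < N, a m = 0) :
    Tendsto (fun s => (N : ℝ) ^ s * dirichletSeries a s) atTop (𝓝 (a N)) := by
  have hN' : (0 : ℝ) < N := by exact_mod_cast hN
  have hpos {m : ℕ} (hm : N ≤ m) : (0 : ℝ) < m := by exact_mod_cast hN.trans_le hm
  have hseries (s : ℝ) :
      (N : ℝ) ^ s * dirichletSeries a s = ∑' m : ℕ, a m * ((N : ℝ) / m) ^ s := by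
    rw [dirichletSeries, ← tsum_mul_left]
    refine tsum_congr fun m => ?_
    rcases lt_or_ge m N with hm | hm
    · simp [ha_lt m hm]
    · rw [div_rpow hN'.le (hpos hm).le, rpow_neg (hpos hm).le]
      ring
  have hlim : (∑' m : ℕ, if m = N then a N else 0) = a N := tsum_ite_eq N fun _ => a N
  simp_rw [hseries]
  rw [← hlim]
  refine tendsto_tsum_of_dominated_convergence (ha.mul_left ((N : ℝ) ^ σ)) (fun m => ?_) ?_
  · rcases lt_trichotomy m N with hm | rfl | hm
    · simp [ha_lt m hm, hm.ne]
    · simp [div_self hN'.ne']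
    · have hbase : Tendsto (fun s : ℝ => ((N : ℝ) / m) ^ s) atTop (𝓝 0) :=
        tendsto_rpow_atTop_of_base_lt_one _ (by linarith [div_pos hN' (hpos hm.le)])
          ((div_lt_one (hpos hm.le)).mpr (by exact_mod_cast hm))
      simpa [hm.ne'] using hbase.const_mul (a m)
  · filter_upwards [eventually_ge_atTop σ] with s hs m
    rcases lt_or_ge m N with hm | hm
    · simp only [ha_lt m hm, zero_mul, norm_zero]
      positivity
    · have hm' := hpos hm
      rw [norm_mul, norm_of_nonneg (rpow_nonneg (div_pos hN' hm').le _)]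
      calc ‖a m‖ * ((N : ℝ) / m) ^ s ≤ ‖a m‖ * ((N : ℝ) / m) ^ σ :=
            mul_le_mul_of_nonneg_left (rpow_le_rpow_of_exponent_ge (div_pos hN' hm')
              ((div_le_one hm').mpr (by exact_mod_cast hm)) hs) (norm_nonneg _)
        _ = (N : ℝ) ^ σ * (‖a m‖ * (m : ℝ) ^ (-σ)) := by
            rw [div_rpow hN'.le hm'.le, rpow_neg hm'.le]
            ring

lemma tendsto_dirichletSeries_logMul_div (ha : Summable fun m : ℕ => ‖a m‖ * (m : ℝ) ^ (-σ))
    {N : ℕ} (hN : 0 < N) (ha_lt : ∀ m < N, a m = 0) (haN : a N ≠ 0) :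
    Tendsto (fun s => dirichletSeries (fun m => a m * log m) s / dirichletSeries a s) atTop
      (𝓝 (log N)) := by
  have ha_log_lt : ∀ m < N, a m * log m = 0 := fun m hm => by rw [ha_lt m hm, zero_mul]
  have hlim := (tendsto_rpow_mul_dirichletSeries
    (ha.norm_mul_log_mul_rpow_neg (lt_add_one σ)) hN ha_log_lt).div
    (tendsto_rpow_mul_dirichletSeries ha hN ha_lt) haN
  rw [mul_div_cancel_left₀ _ haN] at hlim
  refine hlim.congr fun s => ?_
  exact mul_div_mul_left _ _ (rpow_pos_of_pos (by exact_mod_cast hN) s).ne'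

end DirichletSeries

lemma zetaR_eq_dirichletSeries : zetaR = dirichletSeries 1 := by
  ext s
  simp [zetaR, dirichletSeries]

noncomputable def nonSmoothIndicator (N : ℕ) : ℕ → ℝ :=
  Set.indicator {m | m ≠ 0 ∧ m ∉ N.smoothNumbers} 1

lemma norm_nonSmoothIndicator_le (N m : ℕ) : ‖nonSmoothIndicator N m‖ ≤ 1 := by
  unfold nonSmoothIndicator Set.indicator
  split_ifs <;> simp

lemma nonSmoothIndicator_of_lt {N m : ℕ} (hm : m < N) : nonSmoothIndicator N m = 0 := by
  refine Set.indicator_of_notMem ?_ _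
  rintro ⟨hm0, hms⟩
  exact hms (Nat.mem_smoothNumbers_of_lt (Nat.pos_of_ne_zero hm0) hm)

lemma nonSmoothIndicator_prime_self {p : ℕ} (hp : p.Prime) : nonSmoothIndicator p p = 1 := by
  have hmem : p ∈ {m | m ≠ 0 ∧ m ∉ p.smoothNumbers} :=
    ⟨hp.ne_zero, fun h => (Nat.mem_smoothNumbers'.mp h p hp dvd_rfl).false⟩
  rw [nonSmoothIndicator, Set.indicator_of_mem hmem, Pi.one_apply]

lemma zetaR_sub_tsum_smoothNumbers (N : ℕ) {s : ℝ} (hs : 1 < s) :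
    zetaR s - ∑' m : N.smoothNumbers, ((m : ℕ) : ℝ) ^ (-s) =
      dirichletSeries (nonSmoothIndicator N) s := by
  have hsum : Summable fun m : ℕ => (m : ℝ) ^ (-s) := summable_nat_rpow.mpr (by linarith)
  rw [tsum_subtype N.smoothNumbers (fun m : ℕ => (m : ℝ) ^ (-s)), zetaR,
    ← hsum.tsum_sub (hsum.indicator _)]
  refine tsum_congr fun m => ?_
  rcases eq_or_ne m 0 with rfl | hm0
  · simp [zero_rpow (by linarith : -s ≠ 0)]
  by_cases hm : m ∈ N.smoothNumbers
  · simp [nonSmoothIndicator, hm]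
  · simp [nonSmoothIndicator, hm, hm0]

noncomputable def natCastRpowNegHom (s : ℝ) : ℕ →* ℝ where
  toFun m := (m : ℝ) ^ (-s)
  map_one' := by simp
  map_mul' m k := by
    push_cast
    exact mul_rpow m.cast_nonneg k.cast_nonneg

lemma primesBelow_P (n : ℕ) : (P n).primesBelow = (Finset.range n).image P := by
  ext p
  simp only [Nat.mem_primesBelow, Finset.mem_image, Finset.mem_range]
  constructor
  · rintro ⟨hlt, hp⟩
    refine ⟨Nat.count Nat.Prime p, ?_, Nat.nth_count hp⟩
    rw [← Nat.nth_lt_nth Nat.infinite_setOfPred_prime, Nat.nth_count hp]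
    exact hlt
  · rintro ⟨k, hk, rfl⟩
    exact ⟨(Nat.nth_lt_nth Nat.infinite_setOfPred_prime).mpr hk, Nat.prime_nth_prime k⟩

lemma Q_eq_tsum_smoothNumbers (n : ℕ) {s : ℝ} (hs : 1 < s) :
    Q n s = ∑' m : (P n).smoothNumbers, ((m : ℕ) : ℝ) ^ (-s) := by
  have hsum : Summable (natCastRpowNegHom s) := summable_nat_rpow.mpr (by linarith)
  have euler := EulerProduct.prod_primesBelow_geometric_eq_tsum_smoothNumbers hsum (P n)
  rw [primesBelow_P,
    Finset.prod_image (g := P) (Nat.nth_injective Nat.infinite_setOfPred_prime).injOn] at euler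
  exact euler

lemma neg_deriv_Q_sub_zetaR_div_eq (n : ℕ) {s : ℝ} (hs : 1 < s) :
    -((deriv (Q n) s - deriv zetaR s) / (Q n s - zetaR s)) =
      dirichletSeries (fun m => nonSmoothIndicator (P n) m * log m) s /
        dirichletSeries (nonSmoothIndicator (P n)) s := by
  set σ := (1 + s) / 2
  have hσ : 1 < σ := by simp only [σ]; linarith
  have hσs : σ < s := by simp only [σ]; linarith
  have hζ := zetaR_eq_dirichletSeries ▸ hasDerivAt_dirichletSeries
    (summable_norm_mul_rpow_neg_of_norm_le (fun _ => norm_one.le) hσ) (by linarith) hσs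
  have hG := hasDerivAt_dirichletSeries
    (summable_norm_mul_rpow_neg_of_norm_le (norm_nonSmoothIndicator_le (P n)) hσ) (by linarith) hσs
  have hQ : Q n =ᶠ[𝓝 s] zetaR - dirichletSeries (nonSmoothIndicator (P n)) := by
    filter_upwards [eventually_gt_nhds hs] with t ht
    rw [Pi.sub_apply, ← zetaR_sub_tsum_smoothNumbers _ ht, Q_eq_tsum_smoothNumbers n ht]
    ring
  rw [((hζ.sub hG).congr_of_eventuallyEq hQ).deriv, hζ.deriv, hQ.eq_of_nhds, Pi.sub_apply]
  ring

theorem log_prime_limit (n : ℕ) :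
    Tendsto (fun s : ℝ => -((deriv (Q n) s - deriv zetaR s) / (Q n s - zetaR s))) atTop
      (nhds (Real.log (P n))) := by
  have hprime : (P n).Prime := Nat.prime_nth_prime n
  have hlim := tendsto_dirichletSeries_logMul_div
    (summable_norm_mul_rpow_neg_of_norm_le (norm_nonSmoothIndicator_le (P n)) one_lt_two)
    hprime.pos (fun _ => nonSmoothIndicator_of_lt) (by simp [nonSmoothIndicator_prime_self hprime])
  refine hlim.congr' ?_
  filter_upwards [eventually_gt_atTop 1] with s hs
  exact (neg_deriv_Q_sub_zetaR_div_eq n hs).symm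
end
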